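/- arXiv:cs/0103017 — 2 statements merged into one kernel-verified Lean document; each statement's English description precedes it below -/
import Mathlib

section
/- There exist absolute constants c > 0, C > 0 and n₀ such that for every integer n ≥ n₀, the n-point set S = { (t/n, cos(t/√n), sin(t/√n)) : t ∈ {1, …, n} } satisfies: (i) any two distinct points of S whose parameters t, u satisfy |t − u| < 2π√n form a Delaunay edge of S, so S has at least c·n^{3/2} Delaunay edges; and (ii) the spread of S is at most C·√n. -/
/-!
The sample lies on the helix `θ ↦ (a θ, cos θ, sin θ)` with `a = 1/√n`, at `θ = t/√n`. For two
helix points at `θ = μ ± δ` with `0 < δ < π`, the point `(a μ, -R cos μ, -R sin μ)` with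
`R = a² δ / sin δ` has squared distance `1 + R² + a² y² + 2 R cos y` to the helix point at
`μ + y`, and `y ↦ sin δ · y² + 2 δ cos y` is minimal at `y = ±δ`: the sphere through the two
points has no point of the helix inside. The pairs `(t, t + d)` with `d ≤ √n` then give
`≍ n^{3/2}` Delaunay edges. Distinct sample points are `≳ 1/√n` apart by Jordan's inequality
on the circular component, and the sample has diameter at most `3`, so its spread is `O(√n)`.
-/

noncomputable section
open scoped Classical ENNReal Pointwise
open MeasureTheory Real

/-- Points of `ℝ³` as Euclidean space. -/
abbrev E3 : Type := EuclideanSpace ℝ (Fin 3)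

/-- The point `(x, y, z) ∈ ℝ³`. -/
def mk3 (x y z : ℝ) : E3 := (WithLp.equiv 2 (Fin 3 → ℝ)).symm ![x, y, z]

/-- `p` and `q` form a Delaunay edge of the finite set `S`: they are distinct points of `S`
lying on a sphere having no point of `S` in its interior. -/
def IsDelaunayEdge (S : Finset E3) (p q : E3) : Prop :=
  p ∈ S ∧ q ∈ S ∧ p ≠ q ∧
    ∃ (c : E3) (ρ : ℝ), 0 < ρ ∧ dist c p = ρ ∧ dist c q = ρ ∧ ∀ s ∈ S, ρ ≤ dist c s

/-- The number of (unordered) Delaunay edges of `S`. -/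
def delaunayEdgeCount (S : Finset E3) : ℕ :=
  Set.ncard {pq : E3 × E3 | IsDelaunayEdge S pq.1 pq.2} / 2

/-- The minimum pairwise distance of a finite point set. -/
def minPairDist (S : Finset E3) : ℝ :=
  sInf {d : ℝ | ∃ p ∈ S, ∃ q ∈ S, p ≠ q ∧ d = dist p q}

/-- The spread of a finite point set: diameter divided by minimum pairwise distance. -/
def spread (S : Finset E3) : ℝ := Metric.diam (S : Set E3) / minPairDist S
/-- The `t`-th point of the helical sample: `(t/n, cos(t/√n), sin(t/√n))`. -/
def helixPoint (n t : ℕ) : E3 :=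
  mk3 ((t : ℝ) / n) (Real.cos (t / Real.sqrt n)) (Real.sin (t / Real.sqrt n))

/-- The helical sample `S_√n = { (t/n, cos(t/√n), sin(t/√n)) : t ∈ {1, …, n} }`. -/
def helixSample (n : ℕ) : Finset E3 := (Finset.Icc 1 n).image (helixPoint n)

lemma dist_mk3_sq (x₁ y₁ z₁ x₂ y₂ z₂ : ℝ) :
    dist (mk3 x₁ y₁ z₁) (mk3 x₂ y₂ z₂) ^ 2 = (x₁ - x₂) ^ 2 + (y₁ - y₂) ^ 2 + (z₁ - z₂) ^ 2 := by
  rw [EuclideanSpace.dist_eq, Real.sq_sqrt (by positivity), Fin.sum_univ_three]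
  simp [mk3, Real.dist_eq, sq_abs]

lemma isDelaunayEdge_of_dist_le {S : Finset E3} {p q : E3} (hp : p ∈ S) (hq : q ∈ S)
    (hpq : p ≠ q) {c : E3} (hcq : dist c q = dist c p) (hc : ∀ s ∈ S, dist c p ≤ dist c s) :
    IsDelaunayEdge S p q := by
  refine ⟨hp, hq, hpq, c, dist c p, dist_pos.2 ?_, rfl, hcq, hc⟩
  rintro rfl
  exact hpq (dist_eq_zero.1 (by rwa [dist_self] at hcq))

lemma card_div_two_le_delaunayEdgeCount {S : Finset E3} {A : Finset (E3 × E3)}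
    (hA : ∀ pq ∈ A, IsDelaunayEdge S pq.1 pq.2) : A.card / 2 ≤ delaunayEdgeCount S := by
  have hfin : {pq : E3 × E3 | IsDelaunayEdge S pq.1 pq.2}.Finite :=
    (S ×ˢ S).finite_toSet.subset fun pq h => Finset.mem_product.2 ⟨h.1, h.2.1⟩
  refine Nat.div_le_div_right ?_
  rw [← Set.ncard_coe_finset]
  exact Set.ncard_le_ncard (fun pq h => hA pq h) hfin

lemma le_minPairDist {S : Finset E3} {d : ℝ} (hS : ∃ p ∈ S, ∃ q ∈ S, p ≠ q)
    (hd : ∀ p ∈ S, ∀ q ∈ S, p ≠ q → d ≤ dist p q) : d ≤ minPairDist S := by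
  obtain ⟨p, hp, q, hq, hpq⟩ := hS
  refine le_csInf ⟨_, p, hp, q, hq, hpq, rfl⟩ ?_
  rintro _ ⟨p, hp, q, hq, hpq, rfl⟩
  exact hd p hp q hq hpq

lemma spread_le_div {S : Finset E3} {D d : ℝ} (hd : 0 < d)
    (hD : Metric.diam (S : Set E3) ≤ D) (hmin : d ≤ minPairDist S) : spread S ≤ D / d :=
  div_le_div₀ (Metric.diam_nonneg.trans hD) hD hd hmin

lemma mul_sin_le_mul_sin {x y : ℝ} (hx : 0 ≤ x) (hxy : x ≤ y) (hy : y ≤ π) :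
    x * sin y ≤ y * sin x := by
  rcases (hx.trans hxy).eq_or_lt with rfl | hy0
  · simp [le_antisymm hxy hx]
  -- concavity of `sin` on `[0, π]` at `x = (x / y) • y + (1 - x / y) • 0`
  have hconc := strictConcaveOn_sin_Icc.concaveOn.2 (⟨hy0.le, hy⟩ : y ∈ Set.Icc 0 π)
    (⟨le_rfl, pi_pos.le⟩ : (0 : ℝ) ∈ Set.Icc 0 π) (div_nonneg hx hy0.le)
    (sub_nonneg.2 ((div_le_one hy0).2 hxy)) (add_sub_cancel _ _)
  simp only [smul_eq_mul, mul_zero, add_zero, sin_zero, div_mul_cancel₀ x hy0.ne'] at hconc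
  calc x * sin y = x / y * sin y * y := by field_simp
    _ ≤ sin x * y := by gcongr
    _ = y * sin x := mul_comm _ _

lemma mul_one_add_cos_le_two_mul_sin {δ : ℝ} (h0 : 0 ≤ δ) (hπ : δ < π) :
    δ * (1 + cos δ) ≤ 2 * sin δ := by
  have hcos : 0 < cos (δ / 2) := cos_pos_of_mem_Ioo ⟨by linarith, by linarith⟩
  have htan : δ / 2 ≤ tan (δ / 2) := le_tan (by linarith) (by linarith)
  have hx : δ / 2 * cos (δ / 2) ≤ sin (δ / 2) := by
    rwa [tan_eq_sin_div_cos, le_div_iff₀ hcos] at htan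
  have hsin : sin δ = 2 * sin (δ / 2) * cos (δ / 2) := by
    rw [← sin_two_mul, mul_div_cancel₀ _ two_ne_zero]
  have hcos' : 1 + cos δ = 2 * cos (δ / 2) ^ 2 := by
    rw [cos_sq, mul_div_cancel₀ _ two_ne_zero]; ring
  rw [hsin, hcos']
  nlinarith [mul_le_mul_of_nonneg_right hx hcos.le]

lemma sin_mul_sq_add_two_mul_cos_le_of_mem_Icc {δ y : ℝ} (h0 : 0 < δ) (hπ : δ < π)
    (hy : y ∈ Set.Icc 0 (2 * π)) :
    sin δ * δ ^ 2 + 2 * δ * cos δ ≤ sin δ * y ^ 2 + 2 * δ * cos y := by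
  set g : ℝ → ℝ := fun y => sin δ * y ^ 2 + 2 * δ * cos y
  have hg : ∀ x, HasDerivAt g (2 * (x * sin δ - δ * sin x)) x := fun x =>
    (((hasDerivAt_pow 2 x).const_mul (sin δ)).add
      ((hasDerivAt_cos x).const_mul (2 * δ))).congr_deriv (by norm_num; ring)
  have hgc : Continuous g := by fun_prop
  rcases le_total y δ with hyδ | hδy
  · refine antitoneOn_of_hasDerivWithinAt_nonpos (convex_Icc 0 δ) hgc.continuousOn
      (fun x _ => (hg x).hasDerivWithinAt) (fun x hx => ?_) ⟨hy.1, hyδ⟩ ⟨h0.le, le_rfl⟩ hyδ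
    rw [interior_Icc] at hx
    nlinarith [mul_sin_le_mul_sin hx.1.le hx.2.le hπ.le]
  · refine monotoneOn_of_hasDerivWithinAt_nonneg (convex_Icc δ (2 * π)) hgc.continuousOn
      (fun x _ => (hg x).hasDerivWithinAt) (fun x hx => ?_) ⟨le_rfl, by linarith⟩ ⟨hδy, hy.2⟩ hδy
    rw [interior_Icc] at hx
    rcases le_total x π with hxπ | hπx
    · nlinarith [mul_sin_le_mul_sin h0.le hx.1.le hxπ]
    · have : sin x ≤ 0 := by
        rw [← sin_sub_two_pi]
        exact sin_nonpos_of_nonpos_of_neg_pi_le (by linarith [hx.2]) (by linarith)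
      nlinarith [sin_pos_of_pos_of_lt_pi h0 hπ]

lemma sin_mul_sq_add_two_mul_cos_le {δ : ℝ} (h0 : 0 < δ) (hπ : δ < π) (y : ℝ) :
    sin δ * δ ^ 2 + 2 * δ * cos δ ≤ sin δ * y ^ 2 + 2 * δ * cos y := by
  rw [← sq_abs y, ← cos_abs y]
  rcases le_total |y| (2 * π) with hy | hy
  · exact sin_mul_sq_add_two_mul_cos_le_of_mem_Icc h0 hπ ⟨abs_nonneg y, hy⟩
  · -- `sin δ (y² - δ²) ≥ 4 sin δ ≥ 2 δ (1 + cos δ) ≥ 2 δ (cos δ - cos y)`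
    have hsin := sin_pos_of_pos_of_lt_pi h0 hπ
    have hy2 : δ ^ 2 + 4 ≤ |y| ^ 2 := by nlinarith [pi_gt_three]
    nlinarith [mul_one_add_cos_le_two_mul_sin h0.le hπ, mul_le_mul_of_nonneg_left hy2 hsin.le,
      mul_le_mul_of_nonneg_left (neg_one_le_cos |y|) h0.le]

def helix (a θ : ℝ) : E3 := mk3 (a * θ) (cos θ) (sin θ)

lemma dist_mk3_helix_sq (a r μ θ : ℝ) :
    dist (mk3 (a * μ) (r * cos μ) (r * sin μ)) (helix a θ) ^ 2
      = a ^ 2 * (θ - μ) ^ 2 + 1 + r ^ 2 - 2 * r * cos (θ - μ) := by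
  rw [helix, dist_mk3_sq, cos_sub]
  linear_combination r ^ 2 * sin_sq_add_cos_sq μ + sin_sq_add_cos_sq θ

lemma dist_helix_sq (a θ φ : ℝ) :
    dist (helix a θ) (helix a φ) ^ 2 = a ^ 2 * (θ - φ) ^ 2 + 4 * sin ((θ - φ) / 2) ^ 2 := by
  have h := dist_mk3_helix_sq a 1 φ θ
  rw [one_mul, one_mul, ← helix, dist_comm] at h
  have hcos : cos (θ - φ) = 1 - 2 * sin ((θ - φ) / 2) ^ 2 := by
    rw [← cos_two_mul_eq_one_sub, mul_div_cancel₀ _ two_ne_zero]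
  rw [h, hcos]
  ring

lemma exists_empty_sphere_through_helix (a : ℝ) {θ φ : ℝ} (hne : θ ≠ φ) (hlt : |θ - φ| < 2 * π) :
    ∃ c : E3, dist c (helix a φ) = dist c (helix a θ) ∧
      ∀ ψ, dist c (helix a θ) ≤ dist c (helix a ψ) := by
  set μ := (θ + φ) / 2 with hμ
  set δ := |θ - φ| / 2 with hδ
  have hδ0 : 0 < δ := by have := abs_pos.2 (sub_ne_zero.2 hne); positivity
  have hδπ : δ < π := by rw [hδ]; linarith
  have hθ : |θ - μ| = δ := by rw [hμ, hδ, ← abs_two, ← abs_div]; ring_nf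
  have hφ : |φ - μ| = δ := by rw [hμ, hδ, abs_sub_comm θ φ, ← abs_two, ← abs_div]; ring_nf
  -- the radius `R` makes `δ` a critical point of `y ↦ a² y² + 2 R cos y`
  set R := a ^ 2 * δ / sin δ with hR
  have hsinR : sin δ * R = a ^ 2 * δ := by
    rw [hR, mul_div_cancel₀ _ (sin_pos_of_pos_of_lt_pi hδ0 hδπ).ne']
  have hdist : ∀ ψ, dist (mk3 (a * μ) (-R * cos μ) (-R * sin μ)) (helix a ψ) ^ 2
      = 1 + R ^ 2 + (a ^ 2 * |ψ - μ| ^ 2 + 2 * R * cos |ψ - μ|) := fun ψ => by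
    rw [dist_mk3_helix_sq, sq_abs, cos_abs]; ring
  refine ⟨mk3 (a * μ) (-R * cos μ) (-R * sin μ), ?_, fun ψ => ?_⟩
  · rw [← sq_eq_sq₀ dist_nonneg dist_nonneg, hdist, hdist, hθ, hφ]
  · rw [← sq_le_sq₀ dist_nonneg dist_nonneg, hdist, hdist, hθ]
    refine (add_le_add_iff_left _).2 (le_of_mul_le_mul_left ?_ (sin_pos_of_pos_of_lt_pi hδ0 hδπ))
    have key := mul_le_mul_of_nonneg_left
      (sin_mul_sq_add_two_mul_cos_le hδ0 hδπ |ψ - μ|) (sq_nonneg a)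
    linear_combination key + (2 * cos δ - 2 * cos |ψ - μ|) * hsinR

lemma dist_helix_le (a θ φ : ℝ) : dist (helix a θ) (helix a φ) ≤ |a| * |θ - φ| + 2 := by
  rw [← sq_le_sq₀ dist_nonneg (by positivity), dist_helix_sq, ← abs_mul, ← mul_pow,
    ← sq_abs (a * _)]
  nlinarith [abs_nonneg (a * (θ - φ)), sin_sq_le_one ((θ - φ) / 2)]

lemma min_le_dist_helix {a : ℝ} (ha : 0 ≤ a) (θ φ : ℝ) :
    min (a * π) (2 / π * |θ - φ|) ≤ dist (helix a θ) (helix a φ) := by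
  have hsq := dist_helix_sq a θ φ
  rcases le_total |θ - φ| π with hπ | hπ
  · have hjordan : 2 / π * |(θ - φ) / 2| ≤ |sin ((θ - φ) / 2)| := by
      rw [abs_sin_eq_sin_abs_of_abs_le_pi (by rw [abs_div, abs_two]; linarith [pi_pos])]
      exact mul_le_sin (abs_nonneg _) (by rw [abs_div, abs_two]; linarith)
    rw [abs_div, abs_two] at hjordan
    refine min_le_of_right_le ((sq_le_sq₀ (by positivity) dist_nonneg).1 ?_)
    rw [hsq, ← sq_abs (sin _)]
    nlinarith [sq_nonneg (a * (θ - φ)), mul_self_le_mul_self (by positivity) hjordan]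
  · refine min_le_of_left_le ((sq_le_sq₀ (by positivity) dist_nonneg).1 ?_)
    rw [hsq, ← sq_abs (θ - φ)]
    nlinarith [mul_le_mul_of_nonneg_left (mul_self_le_mul_self pi_pos.le hπ) (sq_nonneg a),
      sq_nonneg (sin ((θ - φ) / 2))]

lemma helixPoint_eq_helix (n t : ℕ) : helixPoint n t = helix (√n)⁻¹ (t / √n) := by
  rw [helixPoint, helix, inv_mul_eq_div, div_div, Real.mul_self_sqrt (Nat.cast_nonneg n)]

lemma helixPoint_injective {n : ℕ} (hn : n ≠ 0) : Function.Injective (helixPoint n) := by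
  intro v w h
  have h0 : (v : ℝ) / n = w / n := congrArg (fun p : E3 => p 0) h
  exact_mod_cast (div_left_inj' (Nat.cast_ne_zero.2 hn)).1 h0

lemma helixSample_isDelaunayEdge {n t u : ℕ} (ht : t ∈ Finset.Icc 1 n)
    (hu : u ∈ Finset.Icc 1 n) (htu : t ≠ u) (hlt : |(t : ℝ) - u| < 2 * π * √n) :
    IsDelaunayEdge (helixSample n) (helixPoint n t) (helixPoint n u) := by
  have hn : n ≠ 0 := by have := Finset.mem_Icc.1 ht; omega
  have hs : 0 < √(n : ℝ) := Real.sqrt_pos.2 (by positivity)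
  obtain ⟨c, hcu, hc⟩ := exists_empty_sphere_through_helix (√n)⁻¹ (θ := t / √n) (φ := u / √n)
    (fun h => htu (by exact_mod_cast (div_left_inj' hs.ne').1 h))
    (by rwa [← sub_div, abs_div, abs_of_pos hs, div_lt_iff₀ hs])
  refine isDelaunayEdge_of_dist_le (Finset.mem_image_of_mem _ ht) (Finset.mem_image_of_mem _ hu)
    ((helixPoint_injective hn).ne htu) (c := c) ?_ ?_
  · rwa [helixPoint_eq_helix, helixPoint_eq_helix]
  · intro s hs
    obtain ⟨v, -, rfl⟩ := Finset.mem_image.1 hs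
    rw [helixPoint_eq_helix, helixPoint_eq_helix]
    exact hc _

lemma diam_helixSample_le (n : ℕ) : Metric.diam (helixSample n : Set E3) ≤ 3 := by
  refine Metric.diam_le_of_forall_dist_le zero_le_three fun p hp q hq => ?_
  obtain ⟨v, hv, rfl⟩ := Finset.mem_image.1 hp
  obtain ⟨w, hw, rfl⟩ := Finset.mem_image.1 hq
  obtain ⟨hv1, hvn⟩ := Finset.mem_Icc.1 hv
  obtain ⟨hw1, hwn⟩ := Finset.mem_Icc.1 hw
  have hpitch : |(√n)⁻¹| * |v / √n - w / √n| ≤ 1 := by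
    rw [← abs_mul, ← sub_div, inv_mul_eq_div, div_div, Real.mul_self_sqrt (Nat.cast_nonneg n),
      abs_div, Nat.abs_cast, div_le_one (Nat.cast_pos.2 (by omega)), abs_sub_le_iff]
    constructor <;> linarith [(Nat.cast_le (α := ℝ)).2 hvn, (Nat.cast_le (α := ℝ)).2 hwn,
      (Nat.cast_nonneg (α := ℝ) v), (Nat.cast_nonneg (α := ℝ) w)]
  rw [helixPoint_eq_helix, helixPoint_eq_helix]
  linarith [dist_helix_le (√n)⁻¹ (v / √n) (w / √n)]

lemma le_minPairDist_helixSample {n : ℕ} (hn : 2 ≤ n) :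
    2 / (π * √n) ≤ minPairDist (helixSample n) := by
  have hs : 0 < √(n : ℝ) := Real.sqrt_pos.2 (by positivity)
  refine le_minPairDist ⟨helixPoint n 1, Finset.mem_image_of_mem _ (by simp; omega),
    helixPoint n 2, Finset.mem_image_of_mem _ (by simp; omega),
    (helixPoint_injective (by omega)).ne (by omega)⟩ ?_
  intro p hp q hq hpq
  obtain ⟨v, -, rfl⟩ := Finset.mem_image.1 hp
  obtain ⟨w, -, rfl⟩ := Finset.mem_image.1 hq
  have hvw : (v : ℤ) ≠ w := fun h => hpq (by rw [Int.ofNat_inj.1 h])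
  have hΔ : (1 : ℝ) ≤ |(v : ℝ) - w| := by exact_mod_cast Int.one_le_abs (sub_ne_zero.2 hvw)
  rw [helixPoint_eq_helix, helixPoint_eq_helix]
  refine le_trans ?_ (min_le_dist_helix (inv_nonneg.2 hs.le) _ _)
  rw [← sub_div, abs_div, abs_of_pos hs, le_min_iff]
  constructor
  · field_simp
    nlinarith [pi_gt_three]
  · field_simp
    linarith

lemma spread_helixSample_le {n : ℕ} (hn : 2 ≤ n) : spread (helixSample n) ≤ 5 * √n := by
  have hs : 0 < √(n : ℝ) := Real.sqrt_pos.2 (by positivity)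
  calc spread (helixSample n) ≤ 3 / (2 / (π * √n)) :=
        spread_le_div (by positivity) (diam_helixSample_le n) (le_minPairDist_helixSample hn)
    _ = 3 / 2 * π * √n := by field_simp
    _ ≤ 5 * √n := by nlinarith [pi_lt_d2]

lemma sub_sqrt_mul_sqrt_div_two_le_delaunayEdgeCount {n : ℕ} (hn : n ≠ 0) :
    (n - Nat.sqrt n) * Nat.sqrt n / 2 ≤ delaunayEdgeCount (helixSample n) := by
  set D := Nat.sqrt n
  have hDn : D ≤ n := Nat.sqrt_le_self n
  set f : ℕ × ℕ → E3 × E3 := fun p => (helixPoint n p.1, helixPoint n (p.1 + p.2))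
  have hf : Set.InjOn f ↑(Finset.Icc 1 (n - D) ×ˢ Finset.Icc 1 D) := by
    rintro ⟨t, d⟩ - ⟨t', d'⟩ - h
    have h₁ := helixPoint_injective hn (congrArg Prod.fst h)
    have h₂ := helixPoint_injective hn (congrArg Prod.snd h)
    simp only at h₁ h₂
    rw [Prod.mk.injEq]
    omega
  have hcount := card_div_two_le_delaunayEdgeCount (S := helixSample n)
    (A := (Finset.Icc 1 (n - D) ×ˢ Finset.Icc 1 D).image f) ?_
  · rwa [Finset.card_image_of_injOn hf, Finset.card_product, Nat.card_Icc, Nat.card_Icc,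
      Nat.add_sub_cancel, Nat.add_sub_cancel] at hcount
  simp only [Finset.mem_image, Finset.mem_product, Finset.mem_Icc]
  rintro _ ⟨⟨t, d⟩, ⟨⟨ht1, htn⟩, hd1, hdD⟩, rfl⟩
  refine helixSample_isDelaunayEdge (Finset.mem_Icc.2 ⟨ht1, by omega⟩)
    (Finset.mem_Icc.2 ⟨by omega, by omega⟩) (by omega) ?_
  have hd : (1 : ℝ) ≤ d := by exact_mod_cast hd1
  have hds : (d : ℝ) ≤ √n := (Nat.cast_le.2 hdD).trans Real.nat_sqrt_le_real_sqrt
  rw [Nat.cast_add, sub_add_cancel_left, abs_neg, Nat.abs_cast]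
  nlinarith [pi_gt_three]

lemma rpow_three_halves_div_sixteen_le {n : ℕ} (hn : 16 ≤ n) :
    (n : ℝ) ^ ((3 : ℝ) / 2) / 16 ≤ ((n - Nat.sqrt n) * Nat.sqrt n / 2 : ℕ) := by
  set D := Nat.sqrt n
  set M := (n - D) * D
  have hn0 : (0 : ℝ) < n := by positivity
  have hs4 : 4 ≤ √(n : ℝ) := Real.le_sqrt_of_sq_le (by norm_num; exact_mod_cast hn)
  have hss : √(n : ℝ) * √n = n := Real.mul_self_sqrt hn0.le
  have hD : (D : ℝ) ≤ √n := Real.nat_sqrt_le_real_sqrt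
  have hD' : √(n : ℝ) < D + 1 := Real.real_sqrt_lt_nat_sqrt_succ
  have hM : (n : ℝ) * √n * (9 / 16) ≤ M := by
    have h₁ : 3 / 4 * (n : ℝ) ≤ n - D := by nlinarith
    have h₂ : 3 / 4 * √(n : ℝ) ≤ D := by linarith
    rw [Nat.cast_mul, Nat.cast_sub (Nat.sqrt_le_self n)]
    nlinarith [mul_le_mul h₁ h₂ (by positivity) (by linarith)]
  have hM2 : (M : ℝ) ≤ 2 * (M / 2 : ℕ) + 1 := by exact_mod_cast (by omega : M ≤ 2 * (M / 2) + 1)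
  rw [show (3 : ℝ) / 2 = 1 + 1 / 2 by norm_num, Real.rpow_add hn0, Real.rpow_one,
    ← Real.sqrt_eq_rpow]
  nlinarith

/-- For all sufficiently large `n`, in the `n`-point helical sample `S_√n`:
(i) any two distinct points whose parameters differ by less than `2π√n` form a Delaunay
edge, so `S_√n` has at least `c·n^{3/2}` Delaunay edges; and (ii) the spread of `S_√n` is at
most `C·√n`. -/
theorem helixSample_spread_sqrt_lowerbound :
    ∃ c : ℝ, 0 < c ∧ ∃ C : ℝ, 0 < C ∧ ∃ n₀ : ℕ, ∀ n : ℕ, n₀ ≤ n →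
      ((∀ t ∈ Finset.Icc 1 n, ∀ u ∈ Finset.Icc 1 n, t ≠ u →
          |(t : ℝ) - (u : ℝ)| < 2 * Real.pi * Real.sqrt n →
          IsDelaunayEdge (helixSample n) (helixPoint n t) (helixPoint n u)) ∧
        c * (n : ℝ) ^ ((3 : ℝ) / 2) ≤ (delaunayEdgeCount (helixSample n) : ℝ)) ∧
      spread (helixSample n) ≤ C * Real.sqrt n := by
  refine ⟨1 / 16, by norm_num, 5, by norm_num, 16, fun n hn => ⟨⟨?_, ?_⟩, ?_⟩⟩
  · exact fun t ht u hu htu => helixSample_isDelaunayEdge ht hu htu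
  · calc 1 / 16 * (n : ℝ) ^ ((3 : ℝ) / 2) = (n : ℝ) ^ ((3 : ℝ) / 2) / 16 := by ring
      _ ≤ ((n - Nat.sqrt n) * Nat.sqrt n / 2 : ℕ) := rpow_three_halves_div_sixteen_le hn
      _ ≤ delaunayEdgeCount (helixSample n) := by
        exact_mod_cast sub_sqrt_mul_sqrt_div_two_le_delaunayEdgeCount (by omega)
  · exact spread_helixSample_le (by omega)
end
end

section
/- There exist constants ε₀ > 0, c > 0, and k₀ such that for every integer k ≥ k₀ the following holds. Let P be the set of points (ik, 0, k²) for integers |i| ≤ k/4 together with (0, jk, −k²) for integers |j| ≤ k/4, and let Σ ⊆ ℝ³ be the union of the unit spheres centered at the points of P (so that the local feature size equals 1 at every point of Σ, and an ε-sample of Σ is a set S ⊆ Σ such that every point of Σ is within distance ε of S). Then for every ε with 0 < ε < ε₀, every finite ε-sample S of Σ has at least c·k² Delaunay edges. -/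
noncomputable section
open scoped Classical ENNReal Pointwise
open MeasureTheory Real

/-- The point `p_i = (ik, 0, k²)`. -/
def rowP (k : ℕ) (i : ℤ) : E3 := mk3 ((i : ℝ) * k) 0 ((k : ℝ) ^ 2)

/-- The point `q_j = (0, jk, −k²)`. -/
def rowQ (k : ℕ) (j : ℤ) : E3 := mk3 0 ((j : ℝ) * k) (-(k : ℝ) ^ 2)

/-- The point set `P`: the `p_i` for integers `|i| ≤ k/4` and the `q_j` for `|j| ≤ k/4`. -/
def rowsPQ (k : ℕ) : Set E3 :=
  {x : E3 | ∃ i : ℤ, 4 * |i| ≤ (k : ℤ) ∧ x = rowP k i} ∪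
  {x : E3 | ∃ j : ℤ, 4 * |j| ≤ (k : ℤ) ∧ x = rowQ k j}

/-- The surface `Σ`: the union of the unit spheres centered at the points of `P`. -/
def unitSpheresSurface (k : ℕ) : Set E3 := ⋃ p ∈ rowsPQ k, Metric.sphere p 1

/-! For each pair `(i, j)`, move a center `c` along the vertical line through `(ik, jk, 0)`.
The sample points of `S` nearest to `c` on the spheres around `p_i` and `q_j` lie within `ε` of
those spheres' true distances, and which of the two is nearer flips along the segment
`|z| ≤ k²/2`; by continuity some `c` is equidistant from both. Every other sphere is farther from
`c` by more than `ε`, so the ball about `c` through these two sample points is empty: a Delaunay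
edge joining the spheres of `p_i` and `q_j`. Distinct pairs give distinct edges, and there are
`(2⌊k/4⌋ + 1)² ≥ k²/16` pairs. -/

open Metric Set

section MetricSpace

variable {X : Type*} [PseudoMetricSpace X]

def IsUniformSample (S Y : Set X) (ε : ℝ) : Prop :=
  S ⊆ Y ∧ ∀ y ∈ Y, ∃ s ∈ S, dist y s ≤ ε

theorem eq_of_mem_sphere_of_dist_lt_two {P : Set X} (hP : P.Pairwise fun p q => 3 ≤ dist p q)
    {p q x : X} (hp : p ∈ P) (hq : q ∈ P) (hxq : x ∈ sphere q 1) (hxp : dist x p < 2) : q = p := by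
  by_contra hqp
  linarith [hP hq hp hqp, dist_triangle_left q p x, mem_sphere.1 hxq]

theorem eq_of_mem_sphere_of_mem_sphere {P : Set X} (hP : P.Pairwise fun p q => 3 ≤ dist p q)
    {p q x : X} (hp : p ∈ P) (hq : q ∈ P) (hxp : x ∈ sphere p 1) (hxq : x ∈ sphere q 1) : q = p :=
  eq_of_mem_sphere_of_dist_lt_two hP hp hq hxq (by rw [mem_sphere.1 hxp]; norm_num)

theorem sub_le_infDist_of_subset_sphere {A : Set X} {p c : X} {r : ℝ} (hA : A ⊆ sphere p r)
    (hAne : A.Nonempty) : dist c p - r ≤ infDist c A :=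
  (le_infDist hAne).2 fun a ha => by linarith [dist_triangle c a p, mem_sphere.1 (hA ha)]

theorem exists_infDist_eq_of_continuous {A B : Set X} {γ : ℝ → X} (hγ : Continuous γ)
    {t₁ t₂ : ℝ} (ht : t₁ ≤ t₂)
    (h₁ : infDist (γ t₁) B ≤ infDist (γ t₁) A) (h₂ : infDist (γ t₂) A ≤ infDist (γ t₂) B) :
    ∃ t ∈ Icc t₁ t₂, infDist (γ t) A = infDist (γ t) B := by
  have hf : Continuous fun t => infDist (γ t) A - infDist (γ t) B :=
    ((continuous_infDist_pt A).comp hγ).sub ((continuous_infDist_pt B).comp hγ)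
  obtain ⟨t, ht, h⟩ :=
    intermediate_value_Icc' ht hf.continuousOn ⟨sub_nonpos.2 h₂, sub_nonneg.2 h₁⟩
  exact ⟨t, ht, sub_eq_zero.1 h⟩

end MetricSpace

section NormedSpace

variable {E : Type*} [NormedAddCommGroup E] [NormedSpace ℝ E]

theorem exists_mem_sphere_dist_eq_sub {c p : E} {r : ℝ} (hr : 0 < r) (h : r ≤ dist c p) :
    ∃ x ∈ sphere p r, dist c x = dist c p - r := by
  have hd : 0 < dist c p := hr.trans_le h
  refine ⟨p + (r / dist c p) • (c - p), ?_, ?_⟩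
  · rw [mem_sphere, dist_eq_norm, add_sub_cancel_left, norm_smul, ← dist_eq_norm,
      Real.norm_of_nonneg (by positivity), div_mul_cancel₀ _ hd.ne']
  · have hle : 0 ≤ 1 - r / dist c p := sub_nonneg.2 ((div_le_one hd).2 h)
    rw [dist_eq_norm, show c - (p + (r / dist c p) • (c - p)) = (1 - r / dist c p) • (c - p) by
      module, norm_smul, ← dist_eq_norm c p, Real.norm_of_nonneg hle, sub_mul, one_mul,
      div_mul_cancel₀ _ hd.ne']

theorem exists_mem_inter_sphere_dist_le {P S : Set E} {ε : ℝ}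
    (hP : P.Pairwise fun p q => 3 ≤ dist p q) (hε : ε < 1)
    (hS : IsUniformSample S (⋃ q ∈ P, sphere q 1) ε) {p c : E} (hp : p ∈ P)
    (hc : 1 ≤ dist c p) : ∃ a ∈ S ∩ sphere p 1, dist c a ≤ dist c p - 1 + ε := by
  obtain ⟨x, hx, hcx⟩ := exists_mem_sphere_dist_eq_sub one_pos hc
  obtain ⟨a, haS, hxa⟩ := hS.2 x (mem_biUnion hp hx)
  obtain ⟨q, hq, haq⟩ := mem_iUnion₂.1 (hS.1 haS)
  obtain rfl : q = p := eq_of_mem_sphere_of_dist_lt_two hP hp hq haq <| by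
    linarith [dist_triangle a x p, dist_comm x a, mem_sphere.1 hx]
  exact ⟨a, ⟨haS, haq⟩, by linarith [dist_triangle c x a]⟩

theorem infDist_inter_sphere_le {P S : Set E} {ε : ℝ}
    (hP : P.Pairwise fun p q => 3 ≤ dist p q) (hε : ε < 1)
    (hS : IsUniformSample S (⋃ q ∈ P, sphere q 1) ε) {p c : E} (hp : p ∈ P)
    (hc : 1 ≤ dist c p) : infDist c (S ∩ sphere p 1) ≤ dist c p - 1 + ε :=
  let ⟨_, ha, h⟩ := exists_mem_inter_sphere_dist_le hP hε hS hp hc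
  (infDist_le_dist_of_mem ha).trans h

end NormedSpace

theorem IsDelaunayEdge.symm {S : Finset E3} {p q : E3} (h : IsDelaunayEdge S p q) :
    IsDelaunayEdge S q p :=
  let ⟨hp, hq, hpq, c, ρ, hρ, hcp, hcq, hS⟩ := h
  ⟨hq, hp, hpq.symm, c, ρ, hρ, hcq, hcp, hS⟩

theorem card_le_delaunayEdgeCount {S : Finset E3} {T : Finset (E3 × E3)}
    (hT : ∀ e ∈ T, IsDelaunayEdge S e.1 e.2) (hswap : ∀ e ∈ T, e.swap ∉ T) :
    T.card ≤ delaunayEdgeCount S := by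
  have hfin : {e : E3 × E3 | IsDelaunayEdge S e.1 e.2}.Finite :=
    (S.finite_toSet.prod S.finite_toSet).subset fun e he => ⟨he.1, he.2.1⟩
  have hsub : ↑(T ∪ T.image Prod.swap) ⊆ {e : E3 × E3 | IsDelaunayEdge S e.1 e.2} := by
    intro e he
    rcases Finset.mem_union.1 he with he | he
    · exact hT e he
    · obtain ⟨e', he', rfl⟩ := Finset.mem_image.1 he
      exact (hT e' he').symm
  have hdisj : Disjoint T (T.image Prod.swap) := by
    refine Finset.disjoint_left.2 fun e he he_swap => ?_
    obtain ⟨e', he', rfl⟩ := Finset.mem_image.1 he_swap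
    exact hswap e' he' he
  rw [delaunayEdgeCount, Nat.le_div_iff_mul_le two_pos]
  calc T.card * 2 = (T ∪ T.image Prod.swap).card := by
        rw [Finset.card_union_of_disjoint hdisj,
          Finset.card_image_of_injective _ Prod.swap_injective, mul_two]
    _ = Set.ncard (↑(T ∪ T.image Prod.swap) : Set (E3 × E3)) := (Set.ncard_coe_finset _).symm
    _ ≤ _ := Set.ncard_le_ncard hsub hfin

theorem exists_isDelaunayEdge_of_infDist_eq {S : Finset E3} {A B : Set E3} (hA : A ⊆ S)
    (hB : B ⊆ S) (hAne : A.Nonempty) (hBne : B.Nonempty) (hAB : Disjoint A B) {c : E3}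
    (hc : infDist c A = infDist c B) (hempty : ∀ s ∈ S, infDist c A ≤ dist c s) :
    ∃ a ∈ A, ∃ b ∈ B, IsDelaunayEdge S a b := by
  obtain ⟨a, ha, hca⟩ := (S.finite_toSet.subset hA).isCompact.exists_infDist_eq_dist hAne c
  obtain ⟨b, hb, hcb⟩ := (S.finite_toSet.subset hB).isCompact.exists_infDist_eq_dist hBne c
  have hab : a ≠ b := hAB.ne_of_mem ha hb
  have hpos : 0 < infDist c A := by
    refine infDist_nonneg.lt_of_ne fun h => hab ?_
    have ha0 : dist c a = 0 := by rw [← hca, ← h]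
    have hb0 : dist c b = 0 := by rw [← hcb, ← hc, ← h]
    exact (dist_eq_zero.1 ha0).symm.trans (dist_eq_zero.1 hb0)
  exact ⟨a, ha, b, hb, hA ha, hB hb, hab, c, _, hpos, hca.symm, (hc.trans hcb).symm, hempty⟩

theorem exists_isDelaunayEdge_of_isUniformSample {P : Set E3} {S : Finset E3} {ε : ℝ}
    (hP : P.Pairwise fun p q => 3 ≤ dist p q) (hε : ε < 1)
    (hS : IsUniformSample S (⋃ q ∈ P, sphere q 1) ε) {p q : E3} (hp : p ∈ P) (hq : q ∈ P)
    (hpq : p ≠ q) {γ : ℝ → E3} (hγ : Continuous γ) {t₁ t₂ : ℝ} (ht : t₁ ≤ t₂)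
    (hγ_out : ∀ t ∈ Icc t₁ t₂, 1 ≤ dist (γ t) p ∧ 1 ≤ dist (γ t) q)
    (h₁ : dist (γ t₁) q + ε ≤ dist (γ t₁) p) (h₂ : dist (γ t₂) p + ε ≤ dist (γ t₂) q)
    (hfar : ∀ t ∈ Icc t₁ t₂, ∀ p' ∈ P, p' ≠ p → p' ≠ q →
      min (dist (γ t) p) (dist (γ t) q) + ε ≤ dist (γ t) p') :
    ∃ a b, IsDelaunayEdge S a b ∧ a ∈ sphere p 1 ∧ b ∈ sphere q 1 := by
  set A : Set E3 := ↑S ∩ sphere p 1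
  set B : Set E3 := ↑S ∩ sphere q 1
  have ht₁ : t₁ ∈ Icc t₁ t₂ := ⟨le_rfl, ht⟩
  have ht₂ : t₂ ∈ Icc t₁ t₂ := ⟨ht, le_rfl⟩
  have hA_le (t) (ht : t ∈ Icc t₁ t₂) : infDist (γ t) A ≤ dist (γ t) p - 1 + ε :=
    infDist_inter_sphere_le hP hε hS hp (hγ_out t ht).1
  have hB_le (t) (ht : t ∈ Icc t₁ t₂) : infDist (γ t) B ≤ dist (γ t) q - 1 + ε :=
    infDist_inter_sphere_le hP hε hS hq (hγ_out t ht).2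
  obtain ⟨a, ha, -⟩ := exists_mem_inter_sphere_dist_le hP hε hS hp (hγ_out t₁ ht₁).1
  obtain ⟨b, hb, -⟩ := exists_mem_inter_sphere_dist_le hP hε hS hq (hγ_out t₁ ht₁).2
  have hA_ge (c : E3) : dist c p - 1 ≤ infDist c A :=
    sub_le_infDist_of_subset_sphere inter_subset_right ⟨a, ha⟩
  have hB_ge (c : E3) : dist c q - 1 ≤ infDist c B :=
    sub_le_infDist_of_subset_sphere inter_subset_right ⟨b, hb⟩
  have hAB : Disjoint A B := disjoint_left.2 fun x hxA hxB =>
    hpq (eq_of_mem_sphere_of_mem_sphere hP hp hq hxA.2 hxB.2).symm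
  obtain ⟨t, ht, heq⟩ := exists_infDist_eq_of_continuous (A := A) (B := B) hγ ht
    (by linarith [hA_ge (γ t₁), hB_le t₁ ht₁]) (by linarith [hB_ge (γ t₂), hA_le t₂ ht₂])
  have hempty : ∀ s ∈ S, infDist (γ t) A ≤ dist (γ t) s := by
    intro s hs
    obtain ⟨p', hp', hsp'⟩ := mem_iUnion₂.1 (hS.1 hs)
    by_cases hp'p : p' = p
    · subst hp'p
      exact infDist_le_dist_of_mem ⟨hs, hsp'⟩
    by_cases hp'q : p' = q
    · subst hp'q
      exact heq ▸ infDist_le_dist_of_mem ⟨hs, hsp'⟩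
    have hs_far : dist (γ t) p' - 1 ≤ dist (γ t) s := by
      linarith [dist_triangle (γ t) s p', mem_sphere.1 hsp']
    rcases min_cases (dist (γ t) p) (dist (γ t) q) with ⟨hmin, -⟩ | ⟨hmin, -⟩ <;>
      linarith [hfar t ht p' hp' hp'p hp'q, hA_le t ht, hB_le t ht]
  obtain ⟨a, ha, b, hb, hab⟩ := exists_isDelaunayEdge_of_infDist_eq inter_subset_left
    inter_subset_left ⟨a, ha⟩ ⟨b, hb⟩ hAB heq hempty
  exact ⟨a, b, hab, ha.2, hb.2⟩

theorem continuous_mk3 (x y : ℝ) : Continuous (mk3 x y) :=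
  (PiLp.continuous_toLp 2 _).comp (by fun_prop)

theorem dist_mk3_sq_s16 (x y z x' y' z' : ℝ) :
    dist (mk3 x y z) (mk3 x' y' z') ^ 2 = (x - x') ^ 2 + (y - y') ^ 2 + (z - z') ^ 2 := by
  rw [EuclideanSpace.dist_eq, Real.sq_sqrt (by positivity)]
  simp [mk3, Fin.sum_univ_three, Real.dist_eq, sq_abs]

theorem one_le_sq_intCast_sub {i i' : ℤ} (h : i ≠ i') : (1 : ℝ) ≤ ((i : ℝ) - i') ^ 2 := by
  have : (1 : ℤ) ≤ (i - i') ^ 2 := by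
    rw [← sq_abs]
    exact one_le_pow₀ (Int.one_le_abs (sub_ne_zero.2 h))
  exact_mod_cast this

theorem rowsPQ_pairwise_three_le_dist {k : ℕ} (hk : 3 ≤ k) :
    (rowsPQ k).Pairwise fun p q => 3 ≤ dist p q := by
  have hK : (3 : ℝ) ≤ k := by exact_mod_cast hk
  have hK2 : (3 : ℝ) ^ 2 ≤ (k ^ 2 - -k ^ 2) ^ 2 := pow_le_pow_left₀ (by norm_num) (by nlinarith) 2
  rintro _ (⟨i, -, rfl⟩ | ⟨i, -, rfl⟩) _ (⟨i', -, rfl⟩ | ⟨i', -, rfl⟩) hne <;>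
    simp only [rowP, rowQ] at hne ⊢ <;>
    rw [← sq_le_sq₀ (by norm_num) dist_nonneg, dist_mk3_sq_s16]
  · have := one_le_sq_intCast_sub fun h : i = i' => hne (by rw [h])
    nlinarith
  · nlinarith [sq_nonneg ((i : ℝ) * k), sq_nonneg ((i' : ℝ) * k)]
  · nlinarith [sq_nonneg ((i : ℝ) * k), sq_nonneg ((i' : ℝ) * k)]
  · have := one_le_sq_intCast_sub fun h : i = i' => hne (by rw [h])
    nlinarith

theorem rowP_injective {k : ℕ} (hk : k ≠ 0) : Function.Injective (rowP k) := by
  intro i i' h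
  have h₀ : (i : ℝ) * k = i' * k := congrArg (· 0) h
  exact_mod_cast mul_right_cancel₀ (Nat.cast_ne_zero.2 hk) h₀

theorem rowQ_injective {k : ℕ} (hk : k ≠ 0) : Function.Injective (rowQ k) := by
  intro j j' h
  have h₁ : (j : ℝ) * k = j' * k := congrArg (· 1) h
  exact_mod_cast mul_right_cancel₀ (Nat.cast_ne_zero.2 hk) h₁

theorem rowP_ne_rowQ {k : ℕ} (hk : k ≠ 0) (i j : ℤ) : rowP k i ≠ rowQ k j := by
  intro h
  have h₂ : (k : ℝ) ^ 2 = -(k : ℝ) ^ 2 := congrArg (· 2) h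
  have : (0 : ℝ) < k ^ 2 := by positivity
  linarith


theorem add_le_of_sq_add_sq_le {a b ε K : ℝ} (ha : 0 ≤ a) (haK : a ≤ 2 * K ^ 2) (hb : 0 ≤ b)
    (hε₀ : 0 ≤ ε) (hε : ε ≤ 1 / 5) (hK : 1 ≤ K) (h : a ^ 2 + K ^ 2 ≤ b ^ 2) : a + ε ≤ b := by
  rw [← sq_le_sq₀ (by positivity) hb]
  nlinarith [mul_le_mul haK hε hε₀ (by positivity)]

theorem sixteen_mul_sq_le_sq {k : ℕ} {m : ℤ} (hm : 4 * |m| ≤ k) :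
    16 * (m : ℝ) ^ 2 ≤ (k : ℝ) ^ 2 := by
  have : 4 * |(m : ℝ)| ≤ k := by exact_mod_cast hm
  nlinarith [sq_abs (m : ℝ), abs_nonneg (m : ℝ)]

section VerticalLine

variable {k : ℕ} {i j : ℤ} {t : ℝ}

theorem dist_mk3_rowP_sq (i' : ℤ) : dist (mk3 (i * k) (j * k) t) (rowP k i') ^ 2
    = ((i : ℝ) - i') ^ 2 * k ^ 2 + (j * k) ^ 2 + (t - k ^ 2) ^ 2 := by
  rw [rowP, dist_mk3_sq_s16]; ring

theorem dist_mk3_rowQ_sq (j' : ℤ) : dist (mk3 (i * k) (j * k) t) (rowQ k j') ^ 2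
    = (i * k) ^ 2 + ((j : ℝ) - j') ^ 2 * k ^ 2 + (t + k ^ 2) ^ 2 := by
  rw [rowQ, dist_mk3_sq_s16]; ring

theorem one_le_dist_mk3_rowP (hk : 3 ≤ k) (ht : t ≤ k ^ 2 / 2) :
    1 ≤ dist (mk3 (i * k) (j * k) t) (rowP k i) := by
  have hK : (3 : ℝ) ≤ k := by exact_mod_cast hk
  have h : 1 ≤ (k : ℝ) ^ 2 - t := by nlinarith
  rw [← sq_le_sq₀ zero_le_one dist_nonneg, dist_mk3_rowP_sq]
  nlinarith [sq_nonneg ((j : ℝ) * k), one_le_mul_of_one_le_of_one_le h h]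

theorem one_le_dist_mk3_rowQ (hk : 3 ≤ k) (ht : -k ^ 2 / 2 ≤ t) :
    1 ≤ dist (mk3 (i * k) (j * k) t) (rowQ k j) := by
  have hK : (3 : ℝ) ≤ k := by exact_mod_cast hk
  have h : 1 ≤ (k : ℝ) ^ 2 + t := by nlinarith
  rw [← sq_le_sq₀ zero_le_one dist_nonneg, dist_mk3_rowQ_sq]
  nlinarith [sq_nonneg ((i : ℝ) * k), one_le_mul_of_one_le_of_one_le h h]

theorem dist_mk3_rowP_le (hj : 4 * |j| ≤ k) (ht : t ∈ Icc (-k ^ 2 / 2 : ℝ) (k ^ 2 / 2)) :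
    dist (mk3 (i * k) (j * k) t) (rowP k i) ≤ 2 * k ^ 2 := by
  have := sixteen_mul_sq_le_sq hj
  rw [← sq_le_sq₀ dist_nonneg (by positivity), dist_mk3_rowP_sq]
  nlinarith [ht.1, ht.2]

theorem dist_mk3_rowQ_le (hi : 4 * |i| ≤ k) (ht : t ∈ Icc (-k ^ 2 / 2 : ℝ) (k ^ 2 / 2)) :
    dist (mk3 (i * k) (j * k) t) (rowQ k j) ≤ 2 * k ^ 2 := by
  have := sixteen_mul_sq_le_sq hi
  rw [← sq_le_sq₀ dist_nonneg (by positivity), dist_mk3_rowQ_sq]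
  nlinarith [ht.1, ht.2]

end VerticalLine

theorem exists_isDelaunayEdge_rowP_rowQ {k : ℕ} (hk : 3 ≤ k) {ε : ℝ} (hε₀ : 0 ≤ ε)
    (hε : ε ≤ 1 / 5) {S : Finset E3} (hS : IsUniformSample S (unitSpheresSurface k) ε)
    {i j : ℤ} (hi : 4 * |i| ≤ k) (hj : 4 * |j| ≤ k) :
    ∃ a b, IsDelaunayEdge S a b ∧ a ∈ sphere (rowP k i) 1 ∧ b ∈ sphere (rowQ k j) 1 := by
  have hK : (1 : ℝ) ≤ k := by exact_mod_cast (by omega : 1 ≤ k)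
  have hK2 : (k : ℝ) ^ 2 ≤ k ^ 2 * k ^ 2 := le_mul_of_one_le_left (sq_nonneg _) (by nlinarith)
  have hi' := sixteen_mul_sq_le_sq hi
  have hj' := sixteen_mul_sq_le_sq hj
  have hIcc : (-k ^ 2 / 2 : ℝ) ≤ k ^ 2 / 2 := by linarith [sq_nonneg (k : ℝ)]
  refine exists_isDelaunayEdge_of_isUniformSample (rowsPQ_pairwise_three_le_dist hk)
    (by linarith) hS (Or.inl ⟨i, hi, rfl⟩) (Or.inr ⟨j, hj, rfl⟩) (rowP_ne_rowQ (by omega) i j)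
    (continuous_mk3 (i * k) (j * k)) hIcc
    (fun t ht => ⟨one_le_dist_mk3_rowP hk ht.2, one_le_dist_mk3_rowQ hk ht.1⟩) ?_ ?_ ?_
  · refine add_le_of_sq_add_sq_le dist_nonneg (dist_mk3_rowQ_le hi ⟨le_rfl, hIcc⟩) dist_nonneg
      hε₀ hε hK ?_
    rw [dist_mk3_rowP_sq, dist_mk3_rowQ_sq]
    nlinarith [mul_le_mul_of_nonneg_right hi' (sq_nonneg (k : ℝ)), sq_nonneg ((j : ℝ) * k)]
  · refine add_le_of_sq_add_sq_le dist_nonneg (dist_mk3_rowP_le hj ⟨hIcc, le_rfl⟩) dist_nonneg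
      hε₀ hε hK ?_
    rw [dist_mk3_rowP_sq, dist_mk3_rowQ_sq]
    nlinarith [mul_le_mul_of_nonneg_right hj' (sq_nonneg (k : ℝ)), sq_nonneg ((i : ℝ) * k)]
  · rintro t ht _ (⟨i', -, rfl⟩ | ⟨j', -, rfl⟩) hne₁ hne₂
    · have hii : i' ≠ i := fun h => hne₁ (by rw [h])
      calc _ ≤ dist (mk3 (i * k) (j * k) t) (rowP k i) + ε := by gcongr; exact min_le_left _ _
        _ ≤ _ := by
          refine add_le_of_sq_add_sq_le dist_nonneg (dist_mk3_rowP_le hj ht) dist_nonneg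
            hε₀ hε hK ?_
          rw [dist_mk3_rowP_sq, dist_mk3_rowP_sq]
          nlinarith [one_le_sq_intCast_sub hii]
    · have hjj : j' ≠ j := fun h => hne₂ (by rw [h])
      calc _ ≤ dist (mk3 (i * k) (j * k) t) (rowQ k j) + ε := by gcongr; exact min_le_right _ _
        _ ≤ _ := by
          refine add_le_of_sq_add_sq_le dist_nonneg (dist_mk3_rowQ_le hi ht) dist_nonneg
            hε₀ hε hK ?_
          rw [dist_mk3_rowQ_sq, dist_mk3_rowQ_sq]
          nlinarith [one_le_sq_intCast_sub hjj]

def rowIndices (k : ℕ) : Finset ℤ := Finset.Icc (-((k : ℤ) / 4)) ((k : ℤ) / 4)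

theorem mem_rowIndices {k : ℕ} {i : ℤ} : i ∈ rowIndices k ↔ 4 * |i| ≤ k := by
  rw [rowIndices, Finset.mem_Icc, ← abs_le]
  omega

theorem le_four_mul_card_rowIndices (k : ℕ) : k ≤ 4 * (rowIndices k).card := by
  rw [rowIndices, Int.card_Icc]
  omega

theorem card_rowIndices_sq_le_delaunayEdgeCount {k : ℕ} (hk : 3 ≤ k) {ε : ℝ} (hε₀ : 0 ≤ ε)
    (hε : ε ≤ 1 / 5) {S : Finset E3} (hS : IsUniformSample S (unitSpheresSurface k) ε) :
    (rowIndices k).card ^ 2 ≤ delaunayEdgeCount S := by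
  have hP := rowsPQ_pairwise_three_le_dist hk
  have hk₀ : k ≠ 0 := by omega
  set I := rowIndices k ×ˢ rowIndices k
  have hI {ij : ℤ × ℤ} (hij : ij ∈ I) : 4 * |ij.1| ≤ k ∧ 4 * |ij.2| ≤ k :=
    ⟨mem_rowIndices.1 (Finset.mem_product.1 hij).1, mem_rowIndices.1 (Finset.mem_product.1 hij).2⟩
  choose! a b hab ha hb using fun ij (hij : ij ∈ I) =>
    exists_isDelaunayEdge_rowP_rowQ hk hε₀ hε hS (hI hij).1 (hI hij).2
  have hmemP {ij : ℤ × ℤ} (hij : ij ∈ I) : rowP k ij.1 ∈ rowsPQ k := Or.inl ⟨_, (hI hij).1, rfl⟩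
  have hmemQ {ij : ℤ × ℤ} (hij : ij ∈ I) : rowQ k ij.2 ∈ rowsPQ k := Or.inr ⟨_, (hI hij).2, rfl⟩
  have hinj : Set.InjOn (fun ij => (a ij, b ij)) I := by
    intro ij hij ij' hij' h
    obtain ⟨ha', hb'⟩ := Prod.mk.inj h
    refine Prod.ext (rowP_injective hk₀ ?_) (rowQ_injective hk₀ ?_)
    · exact eq_of_mem_sphere_of_mem_sphere hP (hmemP hij') (hmemP hij)
        (ha' ▸ ha ij' hij') (ha ij hij)
    · exact eq_of_mem_sphere_of_mem_sphere hP (hmemQ hij') (hmemQ hij)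
        (hb' ▸ hb ij' hij') (hb ij hij)
  rw [sq, ← Finset.card_product, ← Finset.card_image_of_injOn hinj]
  refine card_le_delaunayEdgeCount ?_ ?_
  · intro e he
    obtain ⟨ij, hij, rfl⟩ := Finset.mem_image.1 he
    exact hab ij hij
  · intro e he he_swap
    obtain ⟨ij, hij, rfl⟩ := Finset.mem_image.1 he
    obtain ⟨ij', hij', h⟩ := Finset.mem_image.1 he_swap
    have h₁ : a ij' = b ij := congrArg Prod.fst h
    exact rowP_ne_rowQ hk₀ ij'.1 ij.2 (eq_of_mem_sphere_of_mem_sphere hP (hmemQ hij) (hmemP hij')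
      (hb ij hij) (h₁ ▸ ha ij' hij'))

/-- For all sufficiently large `k` and all sufficiently small `ε > 0`, every finite
`ε`-sample of the union of unit spheres centered at the points of `P` (where the local
feature size is identically `1`, so an `ε`-sample is a subset of `Σ` such that every point
of `Σ` is within distance `ε` of it) has at least `c·k²` Delaunay edges. -/
theorem unitSpheresSurface_sample_many_edges :
    ∃ ε₀ : ℝ, 0 < ε₀ ∧ ∃ c : ℝ, 0 < c ∧ ∃ k₀ : ℕ, ∀ k : ℕ, k₀ ≤ k →
      ∀ ε : ℝ, 0 < ε → ε < ε₀ →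
        ∀ S : Finset E3, ↑S ⊆ unitSpheresSurface k →
          (∀ x ∈ unitSpheresSurface k, ∃ p ∈ S, dist x p ≤ ε) →
          c * (k : ℝ) ^ 2 ≤ (delaunayEdgeCount S : ℝ) := by
  refine ⟨1 / 5, by norm_num, 1 / 16, by norm_num, 3, fun k hk ε hε₀ hε S hS_sub hS => ?_⟩
  have hcard : (k : ℝ) ≤ 4 * (rowIndices k).card := by
    exact_mod_cast le_four_mul_card_rowIndices k
  have hedges : ((rowIndices k).card : ℝ) ^ 2 ≤ delaunayEdgeCount S := by
    exact_mod_cast card_rowIndices_sq_le_delaunayEdgeCount hk hε₀.le hε.le ⟨hS_sub, hS⟩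
  nlinarith [(k.cast_nonneg : (0 : ℝ) ≤ k)]
end
end
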